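/- Let S = (X_0,…,X_{d−1}) be a d-symbol with balanced quotient Q = Q(S) and core C = C(S). Let i ≠ j in {0,…,d−1} with Δ = |X_i| − |X_j| > 0. Then: (i) |H_{ij}^Δ(S)| = |H_{ij}^0(Q)| if i > j, and |H_{ij}^Δ(S)| = |H_{ji}^0(Q)| if i < j; (ii) |H_{ji}^Δ(Q)| + |H_{ij}^0(C)| = |H_{ij}^0(S)| if i > j, and |H_{ji}^Δ(Q)| + |H_{ij}^0(C)| = |H_{ji}^0(S)| if i < j; (iii) |H_{ij}^Δ(S)| + |H_{ij}^0(S)| + |H_{ji}^0(S)| = |H_{ji}^Δ(Q)| + |H_{ij}^0(Q)| + |H_{ji}^0(Q)| + |H_{ij}^0(C)|. -/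

import Mathlib

/-- `X^{+s} = (X + s) ∪ {0,…,s−1}` for a β-set `X`. -/
def shiftUp (X : Finset ℕ) (s : ℕ) : Finset ℕ :=
  X.image (· + s) ∪ Finset.range s

/-- The `d`-symbol `s_d(X)` associated to a β-set `X`:
`X_i^{(d)} = {k ∈ ℕ : i + k*d ∈ X}`. -/
def sd (d : ℕ) (X : Finset ℕ) : Fin d → Finset ℕ :=
  fun i => (X.filter fun a => a % d = (i : ℕ)).image fun a => a / d

/-- The inverse of `s_d`, recovering the β-set of a `d`-symbol. -/
def sdInv (d : ℕ) (S : Fin d → Finset ℕ) : Finset ℕ :=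
  Finset.univ.biUnion fun i => (S i).image fun k => (i : ℕ) + k * d

/-- Hooks of a β-set `X`: pairs `(a,b)` with `a > b`, `a ∈ X`, `b ∉ X`. -/
def betaHooks (X : Finset ℕ) : Finset (ℕ × ℕ) :=
  (X ×ˢ Finset.range (X.sup id + 1)).filter fun p => p.2 < p.1 ∧ p.2 ∉ X

/-- Hooks of a `d`-symbol `S`: quadruples `(a,b,i,j)` with `a ∈ S i`, `b ∉ S j`,
and either `a > b`, or `a = b` and `i > j`. -/
def symbolHooks {d : ℕ} (S : Fin d → Finset ℕ) : Finset (ℕ × ℕ × Fin d × Fin d) :=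
  (Finset.range ((Finset.univ.sup fun i => (S i).sup id) + 1) ×ˢ
      Finset.range ((Finset.univ.sup fun i => (S i).sup id) + 1) ×ˢ
      (Finset.univ : Finset (Fin d)) ×ˢ (Finset.univ : Finset (Fin d))).filter
    fun z => z.1 ∈ S z.2.2.1 ∧ z.2.1 ∉ S z.2.2.2 ∧
      (z.2.1 < z.1 ∨ (z.1 = z.2.1 ∧ z.2.2.2 < z.2.2.1))

/-- The partition `p(X)` of a β-set `X = {a_1 > … > a_t}`, as the multiset of the
nonzero numbers among `a_i − (t−i)`; the element `a` contributes the part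
`a − #{b ∈ X : b < a}`. -/
def partitionOf (X : Finset ℕ) : Multiset ℕ :=
  Multiset.filter (· ≠ 0) (X.val.map fun a => a - (X.filter (· < a)).card)

/-- `r`, the maximal number of parts among the partitions `p(X_i)` of a `d`-symbol. -/
def quotCard {d : ℕ} (S : Fin d → Finset ℕ) : ℕ :=
  Finset.univ.sup fun i => Multiset.card (partitionOf (S i))

/-- `Y` is the balanced quotient `Q(S)` of `S`: each `Y i` is the (unique) β-set of
cardinality `r` with `p(Y i) = p(S i)`, where `r` is the maximal number of parts
among the `p(S i)`. -/
def IsBalancedQuotient {d : ℕ} (S Y : Fin d → Finset ℕ) : Prop :=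
  ∀ i, (Y i).card = quotCard S ∧ partitionOf (Y i) = partitionOf (S i)

/-- The core `C(S) = ([x_0],…,[x_{d−1}])` of a `d`-symbol, `x_i = |X_i|`. -/
def coreSymbol {d : ℕ} (S : Fin d → Finset ℕ) : Fin d → Finset ℕ :=
  fun i => Finset.range (S i).card

/-- The `δ`-length `k(a−b) + c_i − c_j` of a hook `(a,b,i,j)`, for the
`d`-hook data tuple `δ = (c_0,…,c_{d−1};k)`. -/
noncomputable def hookLen {d : ℕ} (c : Fin d → ℝ) (k : ℝ)
    (z : ℕ × ℕ × Fin d × Fin d) : ℝ :=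
  k * ((z.1 - z.2.1 : ℕ) : ℝ) + c z.2.2.1 - c z.2.2.2

/-- The multiset `𝓗^δ(S)` of `δ`-lengths of all hooks of `S`. -/
noncomputable def hookLens {d : ℕ} (c : Fin d → ℝ) (k : ℝ)
    (S : Fin d → Finset ℕ) : Multiset ℝ :=
  (symbolHooks S).val.map (hookLen c k)

/-- `H_{ij}^ℓ(S)`, the set of hooks `(a,b,i,j)` of `S` with `a − b = ℓ`. -/
def Hij {d : ℕ} (S : Fin d → Finset ℕ) (i j : Fin d) (ℓ : ℕ) :
    Finset (ℕ × ℕ × Fin d × Fin d) :=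
  (symbolHooks S).filter fun z => z.2.2.1 = i ∧ z.2.2.2 = j ∧ z.1 - z.2.1 = ℓ

/-- The sign-modified length `h̄^{δ_S}` (on hooks of the balanced quotient), where
`x` records the cardinalities `x_i = |X_i|` of `S`, and `δ_S = (c_i + x_i k; k)`.
For a hook `z = (a,b,u,v)` with `ℓ = a − b`: relabelling so that `Δ = x_i − x_j ≥ 0`,
the sign is `+` if `z` lies in position `(i,j)`, or in position `(j,i)` with `ℓ > Δ`,
or in position `(j,i)` with `ℓ = Δ` and `i < j`; otherwise the sign is `−`. -/
noncomputable def signedLen {d : ℕ} (x : Fin d → ℕ) (c : Fin d → ℝ) (k : ℝ)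
    (z : ℕ × ℕ × Fin d × Fin d) : ℝ :=
  if x z.2.2.2 ≤ x z.2.2.1 then
    k * ((z.1 - z.2.1 : ℕ) : ℝ) + (c z.2.2.1 + (x z.2.2.1 : ℝ) * k)
      - (c z.2.2.2 + (x z.2.2.2 : ℝ) * k)
  else if x z.2.2.2 - x z.2.2.1 < z.1 - z.2.1 ∨
      (z.1 - z.2.1 = x z.2.2.2 - x z.2.2.1 ∧ (z.2.2.2 : ℕ) < (z.2.2.1 : ℕ)) then
    k * ((z.1 - z.2.1 : ℕ) : ℝ) + (c z.2.2.1 + (x z.2.2.1 : ℝ) * k)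
      - (c z.2.2.2 + (x z.2.2.2 : ℝ) * k)
  else
    -(k * ((z.1 - z.2.1 : ℕ) : ℝ) + (c z.2.2.1 + (x z.2.2.1 : ℝ) * k)
      - (c z.2.2.2 + (x z.2.2.2 : ℝ) * k))

/-- The permutation `σ_{d,ℓ,e}` of `ℕ`:
`σ(r(dℓ) + sd + t) = r(dℓ) + sd + ((t + re) mod d)`. -/
def twistFun (d ℓ e : ℕ) (n : ℕ) : ℕ :=
  d * ℓ * (n / (d * ℓ)) + d * (n % (d * ℓ) / d) + (n % d + n / (d * ℓ) * e) % d

/-!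
Shifting a β-set, `X ↦ X^{+s}`, leaves its partition unchanged, and a β-set is determined by
its cardinality and partition; hence `Y_i^{+|X_i|} = X_i^{+r}` for the balanced quotient
`Q(S) = (Y_0,…,Y_{d−1})`. Hooks of length `ℓ` from `X^{+s}` to `X'^{+t}` correspond to hooks of
length `ℓ + t − s` from `X` to `X'`, so hooks of length `ℓ` from `Y_u` to `Y_v` correspond to
hooks of length `ℓ + |X_u| − |X_v|` from `X_u` to `X_v`. With `Δ = |X_i| − |X_j|` this turns
`H^Δ_{ij}(S)` into the hooks of length `0` from `Y_i` to `Y_j`, i.e. `Y_i \ Y_j`, and `H^Δ_{ji}(Q)`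
into `X_j \ X_i`. The rest is counting: `|Y_i \ Y_j| = |Y_j \ Y_i|`, and
`|X_i \ X_j| = |X_j \ X_i| + Δ`, where `Δ = |[x_i] \ [x_j]|` counts the hooks of the core.
-/

section

open Finset

def betaPart (X : Finset ℕ) (a : ℕ) : ℕ := a - #{b ∈ X | b < a}

def betaParts (X : Finset ℕ) : Multiset ℕ := X.val.map (betaPart X)

theorem partitionOf_eq_filter_betaParts (X : Finset ℕ) :
    partitionOf X = (betaParts X).filter (· ≠ 0) := rfl

theorem card_betaParts (X : Finset ℕ) : Multiset.card (betaParts X) = #X :=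
  Multiset.card_map _ _

theorem betaPart_eq_card_gaps (X : Finset ℕ) (a : ℕ) :
    betaPart X a = #{c ∈ range a | c ∉ X} := by
  have hsplit := card_filter_add_card_filter_not (s := range a) (· ∈ X)
  have hmem : {c ∈ range a | c ∈ X} = {b ∈ X | b < a} := by
    ext c; simp [and_comm]
  rw [hmem, card_range] at hsplit
  rw [betaPart]
  omega

theorem betaPart_mono (X : Finset ℕ) : Monotone (betaPart X) := fun a b hab => by
  simp only [betaPart_eq_card_gaps]
  exact card_le_card (filter_subset_filter _ (range_subset_range.2 hab))

theorem betaPart_insert_of_forall_lt {s : Finset ℕ} {a : ℕ} (h : ∀ b ∈ s, b < a) :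
    betaPart (insert a s) a = a - #s := by
  rw [betaPart, filter_insert, if_neg (lt_irrefl a), filter_true_of_mem h]

theorem betaParts_insert_of_forall_lt {s : Finset ℕ} {a : ℕ} (h : ∀ b ∈ s, b < a) :
    betaParts (insert a s) = (a - #s) ::ₘ betaParts s := by
  have ha : a ∉ s := fun ha => lt_irrefl a (h a ha)
  rw [betaParts, insert_val_of_notMem ha, Multiset.map_cons, betaParts,
    betaPart_insert_of_forall_lt h]
  congr 1
  refine Multiset.map_congr rfl fun b hb => ?_
  rw [betaPart, betaPart, filter_insert, if_neg (h b hb).not_gt]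

theorem le_of_mem_betaParts_insert {s : Finset ℕ} {a p : ℕ} (h : ∀ b ∈ s, b < a)
    (hp : p ∈ betaParts (insert a s)) : p ≤ a - #s := by
  obtain ⟨b, hb, rfl⟩ := Multiset.mem_map.1 hp
  rw [← betaPart_insert_of_forall_lt h]
  exact betaPart_mono _ ((mem_insert.1 hb).elim le_of_eq fun hb => (h b hb).le)

theorem card_le_of_forall_lt {s : Finset ℕ} {a : ℕ} (h : ∀ b ∈ s, b < a) : #s ≤ a :=
  (card_le_card fun b hb => mem_range.2 (h b hb)).trans_eq (card_range a)

theorem exists_eq_insert_of_nonempty {X : Finset ℕ} (hX : X.Nonempty) :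
    ∃ a s, (∀ b ∈ s, b < a) ∧ X = insert a s :=
  ⟨X.max' hX, X.erase (X.max' hX), fun _ => X.lt_max'_of_mem_erase_max' hX,
    (insert_erase (X.max'_mem hX)).symm⟩

/-- The largest element `a` of a β-set is recovered from its largest part `a - (#X - 1)`. -/
theorem eq_of_betaParts_eq {X X' : Finset ℕ} (h : betaParts X = betaParts X') : X = X' := by
  induction X using Finset.induction_on_max generalizing X' with
  | empty =>
    have : #X' = 0 := by rw [← card_betaParts, ← h]; rfl
    exact (card_eq_zero.1 this).symm
  | insert a s hlt ih =>
    have hX' : X'.Nonempty := by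
      rw [← card_pos, ← card_betaParts, ← h, card_betaParts]
      exact card_pos.2 (insert_nonempty a s)
    obtain ⟨a', s', hlt', rfl⟩ := exists_eq_insert_of_nonempty hX'
    have hcard : #s = #s' := by
      have := congrArg Multiset.card h
      rw [betaParts_insert_of_forall_lt hlt, betaParts_insert_of_forall_lt hlt'] at this
      simpa [card_betaParts] using this
    have hle : a - #s ≤ a' - #s' := le_of_mem_betaParts_insert hlt' (h ▸ by
      rw [betaParts_insert_of_forall_lt hlt]; exact Multiset.mem_cons_self _ _)
    have hge : a' - #s' ≤ a - #s := le_of_mem_betaParts_insert hlt (h.symm ▸ by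
      rw [betaParts_insert_of_forall_lt hlt']; exact Multiset.mem_cons_self _ _)
    have hsa : #s ≤ a := card_le_of_forall_lt hlt
    have hsa' : #s' ≤ a' := card_le_of_forall_lt hlt'
    obtain rfl : a = a' := by omega
    rw [betaParts_insert_of_forall_lt hlt, betaParts_insert_of_forall_lt hlt', hcard,
      Multiset.cons_inj_right] at h
    rw [ih h]

theorem betaParts_eq_add_replicate (X : Finset ℕ) :
    betaParts X = partitionOf X + Multiset.replicate (#X - Multiset.card (partitionOf X)) 0 := by
  have hsplit := Multiset.filter_add_not (· ≠ 0) (betaParts X)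
  have hzeros : (betaParts X).filter (fun p => ¬p ≠ 0) =
      Multiset.replicate (Multiset.card ((betaParts X).filter fun p => ¬p ≠ 0)) 0 :=
    Multiset.eq_replicate_card.2 fun p hp => not_not.1 (Multiset.mem_filter.1 hp).2
  have hcard := congrArg Multiset.card hsplit
  rw [Multiset.card_add, card_betaParts] at hcard
  rw [partitionOf_eq_filter_betaParts, ← hcard, Nat.add_sub_cancel_left, ← hzeros, hsplit]

theorem eq_of_card_eq_of_partitionOf_eq {X X' : Finset ℕ} (hcard : #X = #X')
    (hpart : partitionOf X = partitionOf X') : X = X' :=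
  eq_of_betaParts_eq <| by rw [betaParts_eq_add_replicate, betaParts_eq_add_replicate, hcard, hpart]

theorem mem_shiftUp {X : Finset ℕ} {s b : ℕ} :
    b ∈ shiftUp X s ↔ b < s ∨ s ≤ b ∧ b - s ∈ X := by
  simp only [shiftUp, mem_union, mem_image, mem_range]
  constructor
  · rintro (⟨a, ha, rfl⟩ | hb)
    · exact Or.inr ⟨by omega, by simpa using ha⟩
    · exact Or.inl hb
  · rintro (hb | ⟨hsb, hb⟩)
    · exact Or.inr hb
    · exact Or.inl ⟨b - s, hb, by omega⟩

theorem card_shiftUp (X : Finset ℕ) (s : ℕ) : #(shiftUp X s) = #X + s := by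
  rw [shiftUp, card_union_of_disjoint, card_image_of_injective _ (add_left_injective s),
    card_range]
  simp only [disjoint_left, mem_image, mem_range]
  rintro _ ⟨a, _, rfl⟩
  omega

theorem shiftUp_shiftUp (X : Finset ℕ) (s t : ℕ) :
    shiftUp (shiftUp X s) t = shiftUp X (s + t) := by
  ext b
  simp only [mem_shiftUp, Nat.sub_sub, Nat.add_comm t s]
  by_cases hb : b - (s + t) ∈ X <;> simp only [hb, and_true, and_false, or_false] <;> omega

theorem betaPart_shiftUp (X : Finset ℕ) (s b : ℕ) :
    betaPart (shiftUp X s) b = betaPart X (b - s) := by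
  rw [betaPart_eq_card_gaps, betaPart_eq_card_gaps]
  refine card_nbij' (· - s) (· + s) ?_ ?_ ?_ ?_ <;> intro c <;>
    simp only [coe_filter, mem_range, mem_shiftUp, Set.mem_ofPred_eq, not_or, not_and,
      not_lt, Nat.add_sub_cancel] <;> grind

theorem val_shiftUp (X : Finset ℕ) (s : ℕ) :
    (shiftUp X s).val = X.val.map (· + s) + (range s).val := by
  rw [shiftUp, ← disjUnion_eq_union, disjUnion_val,
    image_val_of_injOn (add_left_injective s).injOn]
  simp only [disjoint_left, mem_image, mem_range]
  rintro _ ⟨a, _, rfl⟩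
  omega

theorem betaParts_shiftUp (X : Finset ℕ) (s : ℕ) :
    betaParts (shiftUp X s) = betaParts X + Multiset.replicate s 0 := by
  simp only [betaParts, betaPart_shiftUp, val_shiftUp, Multiset.map_add, Multiset.map_map]
  congr 1
  · simp only [Function.comp_def, Nat.add_sub_cancel]
  · refine Multiset.eq_replicate.2 ⟨by simp, fun p hp => ?_⟩
    obtain ⟨c, hc, rfl⟩ := Multiset.mem_map.1 hp
    rw [Nat.sub_eq_zero_of_le (Multiset.mem_range.1 hc).le, betaPart, Nat.zero_sub]

theorem partitionOf_shiftUp (X : Finset ℕ) (s : ℕ) :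
    partitionOf (shiftUp X s) = partitionOf X := by
  rw [partitionOf_eq_filter_betaParts, partitionOf_eq_filter_betaParts, betaParts_shiftUp,
    Multiset.filter_add,
    Multiset.filter_eq_nil.2 fun p hp => not_not.2 (Multiset.eq_of_mem_replicate hp), add_zero]

def hookCount (X X' : Finset ℕ) (ℓ : ℕ) : ℕ := #{a ∈ X | ℓ ≤ a ∧ a - ℓ ∉ X'}

theorem hookCount_zero (X X' : Finset ℕ) : hookCount X X' 0 = #(X \ X') := by
  simp [hookCount, filter_notMem_eq_sdiff]

/-- A hook starting below `s` in `X^{+s}` would end in `{0,…,t-1} ⊆ X'^{+t}`. -/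
theorem hookCount_shiftUp (X X' : Finset ℕ) {ℓ s t : ℕ} (h : s ≤ ℓ + t) :
    hookCount (shiftUp X s) (shiftUp X' t) ℓ = hookCount X X' (ℓ + t - s) := by
  refine card_nbij' (· - s) (· + s) ?_ ?_ ?_ ?_ <;> intro a <;>
    simp only [coe_filter, mem_shiftUp, Set.mem_ofPred_eq, not_or, not_and, not_lt,
      Nat.add_sub_cancel] <;> grind

theorem le_sup_sup {d : ℕ} (S : Fin d → Finset ℕ) {i : Fin d} {a : ℕ} (ha : a ∈ S i) :
    a ≤ univ.sup fun k => (S k).sup id :=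
  (le_sup (f := id) ha).trans (le_sup (f := fun k => (S k).sup id) (mem_univ i))

theorem mem_Hij {d : ℕ} {S : Fin d → Finset ℕ} {i j : Fin d} {ℓ a b : ℕ} {u v : Fin d} :
    (a, b, u, v) ∈ Hij S i j ℓ ↔
      u = i ∧ v = j ∧ a ∈ S i ∧ b ∉ S j ∧ (b < a ∨ a = b ∧ j < i) ∧ a - b = ℓ := by
  simp only [Hij, symbolHooks, mem_filter, mem_product, mem_range, mem_univ, and_true]
  constructor
  · rintro ⟨⟨_, ha, hb, hab⟩, rfl, rfl, hℓ⟩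
    exact ⟨rfl, rfl, ha, hb, hab, hℓ⟩
  · rintro ⟨rfl, rfl, ha, hb, hab, hℓ⟩
    have := le_sup_sup S ha
    exact ⟨⟨⟨by omega, by omega⟩, ha, hb, hab⟩, rfl, rfl, hℓ⟩

theorem card_Hij_of_pos {d : ℕ} (S : Fin d → Finset ℕ) (i j : Fin d) {ℓ : ℕ} (hℓ : 0 < ℓ) :
    #(Hij S i j ℓ) = hookCount (S i) (S j) ℓ := by
  refine card_nbij' (·.1) (fun a => (a, a - ℓ, i, j)) ?_ ?_ ?_ ?_
    <;> simp only [Set.MapsTo, Set.LeftInvOn, Set.RightInvOn, Prod.forall, coe_filter,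
      mem_coe, mem_Hij, Set.mem_ofPred_eq] <;> grind

theorem card_Hij_zero {d : ℕ} (S : Fin d → Finset ℕ) (i j : Fin d) :
    #(Hij S i j 0) = if j < i then #(S i \ S j) else 0 := by
  split_ifs with hji
  · refine card_nbij' (·.1) (fun a => (a, a, i, j)) ?_ ?_ ?_ ?_
      <;> simp only [Set.MapsTo, Set.LeftInvOn, Set.RightInvOn, Prod.forall,
        coe_sdiff, mem_coe, mem_Hij, Set.mem_sdiff] <;> grind
  · refine card_eq_zero.2 (eq_empty_iff_forall_notMem.2 fun ⟨a, b, u, v⟩ h => ?_)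
    grind [mem_Hij]

section BalancedQuotient

variable {d : ℕ} {S Y : Fin d → Finset ℕ}

theorem IsBalancedQuotient.shiftUp_eq (hY : IsBalancedQuotient S Y) (i : Fin d) :
    shiftUp (Y i) #(S i) = shiftUp (S i) (quotCard S) :=
  eq_of_card_eq_of_partitionOf_eq (by rw [card_shiftUp, card_shiftUp, (hY i).1, add_comm])
    (by rw [partitionOf_shiftUp, partitionOf_shiftUp, (hY i).2])

theorem IsBalancedQuotient.hookCount_eq (hY : IsBalancedQuotient S Y) (u v : Fin d) {ℓ : ℕ}
    (h : #(S v) ≤ ℓ + #(S u)) :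
    hookCount (Y u) (Y v) ℓ = hookCount (S u) (S v) (ℓ + #(S u) - #(S v)) :=
  calc hookCount (Y u) (Y v) ℓ
      = hookCount (shiftUp (Y u) #(S u)) (shiftUp (Y v) #(S v)) (ℓ + #(S u) - #(S v)) := by
        rw [hookCount_shiftUp _ _ (by omega)]
        congr 1
        omega
    _ = hookCount (S u) (S v) (ℓ + #(S u) - #(S v)) := by
        rw [hY.shiftUp_eq, hY.shiftUp_eq, hookCount_shiftUp _ _ (by omega), Nat.add_sub_cancel]

end BalancedQuotient

theorem card_range_sdiff_range (m n : ℕ) : #(range m \ range n) = m - n := by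
  rw [card_sdiff, card_range, range_inter_range, card_range]
  omega

end

theorem card_Hij_delta_and_zero_general (d : ℕ) (S Y : Fin d → Finset ℕ)
    (hY : IsBalancedQuotient S Y) (i j : Fin d) (hij : i ≠ j)
    (Δ : ℕ) (hΔ : Δ = (S i).card - (S j).card) (hΔpos : (S j).card < (S i).card) :
    ((j < i → (Hij S i j Δ).card = (Hij Y i j 0).card) ∧
      (i < j → (Hij S i j Δ).card = (Hij Y j i 0).card)) ∧
    ((j < i → (Hij Y j i Δ).card + (Hij (coreSymbol S) i j 0).card = (Hij S i j 0).card) ∧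
      (i < j → (Hij Y j i Δ).card + (Hij (coreSymbol S) i j 0).card = (Hij S j i 0).card)) ∧
    ((Hij S i j Δ).card + (Hij S i j 0).card + (Hij S j i 0).card =
      (Hij Y j i Δ).card + (Hij Y i j 0).card + (Hij Y j i 0).card +
        (Hij (coreSymbol S) i j 0).card) := by
  have hΔ0 : 0 < Δ := by omega
  have hS : (Hij S i j Δ).card = (Y i \ Y j).card := by
    rw [card_Hij_of_pos S i j hΔ0, ← hookCount_zero, hY.hookCount_eq i j (by omega), hΔ,
      Nat.zero_add]
  have hQ : (Hij Y j i Δ).card = (S j \ S i).card := by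
    rw [card_Hij_of_pos Y j i hΔ0, ← hookCount_zero, hY.hookCount_eq j i (by omega)]
    congr 1
    omega
  have hQsymm : (Y i \ Y j).card = (Y j \ Y i).card :=
    Finset.card_sdiff_comm (by rw [(hY i).1, (hY j).1])
  have hSdiff : (S i \ S j).card = (S j \ S i).card + Δ := by
    grind [Finset.card_sdiff_add_card_inter, Finset.inter_comm]
  have hC : (coreSymbol S i \ coreSymbol S j).card = Δ := by
    rw [coreSymbol, coreSymbol, card_range_sdiff_range, hΔ]
  simp only [card_Hij_zero, hS, hQ, hC]
  split_ifs <;> omega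

/-- For `i ≠ j` with `Δ = |X_i| − |X_j| > 0`:
(i) `|H_{ij}^Δ(S)| = |H_{ij}^0(Q)|` if `i > j`, and `|H_{ij}^Δ(S)| = |H_{ji}^0(Q)|`
if `i < j`;
(ii) `|H_{ji}^Δ(Q)| + |H_{ij}^0(C)| = |H_{ij}^0(S)|` if `i > j`, and
`|H_{ji}^Δ(Q)| + |H_{ij}^0(C)| = |H_{ji}^0(S)|` if `i < j`;
(iii) `|H_{ij}^Δ(S)| + |H_{ij}^0(S)| + |H_{ji}^0(S)|
  = |H_{ji}^Δ(Q)| + |H_{ij}^0(Q)| + |H_{ji}^0(Q)| + |H_{ij}^0(C)|`. -/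
theorem card_Hij_delta_and_zero (d : ℕ) (hd : 0 < d) (S Y : Fin d → Finset ℕ)
    (hY : IsBalancedQuotient S Y) (i j : Fin d) (hij : i ≠ j)
    (Δ : ℕ) (hΔ : Δ = (S i).card - (S j).card) (hΔpos : (S j).card < (S i).card) :
    ((j < i → (Hij S i j Δ).card = (Hij Y i j 0).card) ∧
      (i < j → (Hij S i j Δ).card = (Hij Y j i 0).card)) ∧
    ((j < i → (Hij Y j i Δ).card + (Hij (coreSymbol S) i j 0).card = (Hij S i j 0).card) ∧
      (i < j → (Hij Y j i Δ).card + (Hij (coreSymbol S) i j 0).card = (Hij S j i 0).card)) ∧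
    ((Hij S i j Δ).card + (Hij S i j 0).card + (Hij S j i 0).card =
      (Hij Y j i Δ).card + (Hij Y i j 0).card + (Hij Y j i 0).card +
        (Hij (coreSymbol S) i j 0).card) :=
  card_Hij_delta_and_zero_general d S Y hY i j hij Δ hΔ hΔpos
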